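/- arXiv:1304.7963 — 3 statements merged into one kernel-verified Lean document; each statement's English description precedes it below -/
import Mathlib

section
/- Let X be a nonempty compact metric space and let f, g : X → ℝ be continuous. Then osc(f+g) ≤ osc(f) + osc(g), and equality holds if and only if both argmin(f) ∩ argmin(g) ≠ ∅ and argmax(f) ∩ argmax(g) ≠ ∅. -/
open MeasureTheory Set

/-- The (attained) minimum of `f` on a nonempty compact space. -/
noncomputable def minF {X : Type*} (f : X → ℝ) : ℝ := sInf (Set.range f)

/-- The (attained) maximum of `f` on a nonempty compact space. -/
noncomputable def maxF {X : Type*} (f : X → ℝ) : ℝ := sSup (Set.range f)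

/-- The oscillation `max f - min f`. -/
noncomputable def oscF {X : Type*} (f : X → ℝ) : ℝ := maxF f - minF f

/-- `normalize f = f - min f`. -/
noncomputable def normF {X : Type*} (f : X → ℝ) : X → ℝ := fun x => f x - minF f

/-- The minimizer set of `f`. -/
def argminF {X : Type*} (f : X → ℝ) : Set X := {x | f x = minF f}

/-- The maximizer set of `f`. -/
def argmaxF {X : Type*} (f : X → ℝ) : Set X := {x | f x = maxF f}

/-!
The minimum of `f + g` is at least `min f + min g`, with equality exactly when some point minimizes
`f` and `g` simultaneously (evaluate at a minimizer of `f + g`); dually for the maximum. Subtracting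
the two inequalities gives the bound on the oscillation, and equality there forces equality in both.
-/

section

variable {X : Type*} [TopologicalSpace X] [CompactSpace X] {f g : X → ℝ}

lemma minF_le (hf : Continuous f) (x : X) : minF f ≤ f x :=
  csInf_le (isCompact_range hf).bddBelow (mem_range_self x)

lemma le_maxF (hf : Continuous f) (x : X) : f x ≤ maxF f :=
  le_csSup (isCompact_range hf).bddAbove (mem_range_self x)

variable [Nonempty X]

lemma exists_eq_minF (hf : Continuous f) : ∃ x, f x = minF f :=
  (isCompact_range hf).sInf_mem (range_nonempty f)

lemma exists_eq_maxF (hf : Continuous f) : ∃ x, f x = maxF f :=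
  (isCompact_range hf).sSup_mem (range_nonempty f)

lemma minF_add_minF_le_minF_add (hf : Continuous f) (hg : Continuous g) :
    minF f + minF g ≤ minF (fun x => f x + g x) :=
  le_csInf (range_nonempty _) <| by
    rintro _ ⟨x, rfl⟩
    exact add_le_add (minF_le hf x) (minF_le hg x)

lemma maxF_add_le_maxF_add_maxF (hf : Continuous f) (hg : Continuous g) :
    maxF (fun x => f x + g x) ≤ maxF f + maxF g :=
  csSup_le (range_nonempty _) <| by
    rintro _ ⟨x, rfl⟩
    exact add_le_add (le_maxF hf x) (le_maxF hg x)

lemma minF_add_eq_iff (hf : Continuous f) (hg : Continuous g) :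
    minF (fun x => f x + g x) = minF f + minF g ↔ (argminF f ∩ argminF g).Nonempty := by
  have hfg : Continuous fun x => f x + g x := hf.add hg
  constructor
  · intro h
    obtain ⟨x, hx⟩ := exists_eq_minF hfg
    have hfx := minF_le hf x
    have hgx := minF_le hg x
    exact ⟨x, show f x = minF f by linarith, show g x = minF g by linarith⟩
  · rintro ⟨x, hfx : f x = minF f, hgx : g x = minF g⟩
    have hsum := minF_le hfg x
    linarith [minF_add_minF_le_minF_add hf hg]

lemma maxF_add_eq_iff (hf : Continuous f) (hg : Continuous g) :
    maxF (fun x => f x + g x) = maxF f + maxF g ↔ (argmaxF f ∩ argmaxF g).Nonempty := by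
  have hfg : Continuous fun x => f x + g x := hf.add hg
  constructor
  · intro h
    obtain ⟨x, hx⟩ := exists_eq_maxF hfg
    have hfx := le_maxF hf x
    have hgx := le_maxF hg x
    exact ⟨x, show f x = maxF f by linarith, show g x = maxF g by linarith⟩
  · rintro ⟨x, hfx : f x = maxF f, hgx : g x = maxF g⟩
    have hsum := le_maxF hfg x
    linarith [maxF_add_le_maxF_add_maxF hf hg]

end

theorem stmt_1 {X : Type*} [MetricSpace X] [CompactSpace X] [Nonempty X]
    (f g : X → ℝ) (hf : Continuous f) (hg : Continuous g) :
    oscF (fun x => f x + g x) ≤ oscF f + oscF g ∧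
    (oscF (fun x => f x + g x) = oscF f + oscF g ↔
      (argminF f ∩ argminF g).Nonempty ∧ (argmaxF f ∩ argmaxF g).Nonempty) := by
  have hmin := minF_add_minF_le_minF_add hf hg
  have hmax := maxF_add_le_maxF_add_maxF hf hg
  rw [← minF_add_eq_iff hf hg, ← maxF_add_eq_iff hf hg]
  unfold oscF
  refine ⟨by linarith, fun h => ⟨by linarith, by linarith⟩, fun ⟨h₁, h₂⟩ => by linarith⟩
end

section
/- Let X be a nonempty compact metric space and μ a finite Borel measure on X with full support (μ(U) > 0 for every nonempty open U ⊆ X). Let u, w : X → ℝ be continuous with min u = 0, max u = l > 0 and min w = 0. For t ∈ [0,1] set h_t := min(t·l, u) + w and g(t) := ∫_X normalize(h_t) dμ. Then for every t ∈ (0,1), g(t) < max(g(0), g(1)), i.e. ∫_X normalize(min(t·l,u)+w) dμ < max(∫_X normalize(w) dμ, ∫_X normalize(u+w) dμ). -/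
/-!
Write `h_t = min (t * l + w) (u + w)`. On a compact space the minimum of a pointwise minimum is the
minimum of the minima, so `normalize h_t` lies pointwise below `normalize (t * l + w) = normalize w`
when `t * l ≤ min (u + w)`, and below `normalize (u + w)` otherwise. The inequality is strict at a
zero of `u` in the first case and at a maximum of `u` in the second, and a measure of full support
turns a strict pointwise inequality at one point between continuous functions into a strict
inequality of integrals.
-/

open MeasureTheory Set

section MinF

variable {X : Type*} [TopologicalSpace X] [CompactSpace X] {f g : X → ℝ}

variable [Nonempty X]

lemma minF_mem_range (hf : Continuous f) : minF f ∈ range f :=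
  (isCompact_range hf).sInf_mem (range_nonempty f)

lemma maxF_mem_range (hf : Continuous f) : maxF f ∈ range f :=
  (isCompact_range hf).sSup_mem (range_nonempty f)

lemma minF_const_add (hf : Continuous f) (c : ℝ) : minF (fun x => c + f x) = c + minF f := by
  obtain ⟨x₀, hx₀⟩ := minF_mem_range hf
  refine IsLeast.csInf_eq ⟨⟨x₀, show c + f x₀ = _ by rw [hx₀]⟩, ?_⟩
  rintro _ ⟨x, rfl⟩
  simpa using minF_le hf x

lemma normF_const_add (hf : Continuous f) (c : ℝ) : normF (fun x => c + f x) = normF f := by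
  ext x
  simp only [normF, minF_const_add hf]
  ring

lemma minF_min (hf : Continuous f) (hg : Continuous g) :
    minF (fun x => min (f x) (g x)) = min (minF f) (minF g) := by
  obtain ⟨xf, hxf⟩ := minF_mem_range hf
  obtain ⟨xg, hxg⟩ := minF_mem_range hg
  refine IsLeast.csInf_eq ⟨?_, ?_⟩
  · rcases le_total (minF f) (minF g) with h | h
    · refine ⟨xf, show min (f xf) (g xf) = _ from ?_⟩
      rw [hxf, min_eq_left h, min_eq_left (h.trans (minF_le hg xf))]
    · refine ⟨xg, show min (f xg) (g xg) = _ from ?_⟩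
      rw [hxg, min_eq_right h, min_eq_right (h.trans (minF_le hf xg))]
  · rintro _ ⟨x, rfl⟩
    exact min_le_min (minF_le hf x) (minF_le hg x)

end MinF

section StrictIntegral

variable {X : Type*} [TopologicalSpace X] [CompactSpace X] [MeasurableSpace X]
  [OpensMeasurableSpace X] {μ : Measure X} [IsFiniteMeasure μ] {f g : X → ℝ}

lemma Continuous.integrable_of_compactSpace (hf : Continuous f) : Integrable f μ :=
  hf.integrable_of_hasCompactSupport (.of_compactSpace f)

variable [μ.IsOpenPosMeasure]

lemma integral_lt_integral_of_continuous_of_le_of_lt (hf : Continuous f) (hg : Continuous g)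
    (hle : f ≤ g) {x₀ : X} (hlt : f x₀ < g x₀) : ∫ x, f x ∂μ < ∫ x, g x ∂μ := by
  have hpos : 0 < ∫ x, (g - f) x ∂μ :=
    integral_pos_of_integrable_nonneg_nonzero (hg.sub hf) (hg.sub hf).integrable_of_compactSpace
      (sub_nonneg.2 hle) (sub_pos.2 hlt).ne'
  rw [Pi.sub_def, integral_sub hg.integrable_of_compactSpace hf.integrable_of_compactSpace] at hpos
  linarith

variable [Nonempty X]

lemma integral_normF_min_lt_left (hf : Continuous f) (hg : Continuous g)
    (hmin : minF f ≤ minF g) {x₀ : X} (hlt : g x₀ < f x₀) :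
    ∫ x, normF (fun x => min (f x) (g x)) x ∂μ < ∫ x, normF f x ∂μ := by
  have hnorm : normF (fun x => min (f x) (g x)) = fun x => min (f x) (g x) - minF f := by
    ext x
    rw [normF, minF_min hf hg, min_eq_left hmin]
  rw [hnorm]
  refine integral_lt_integral_of_continuous_of_le_of_lt ((hf.min hg).sub continuous_const)
    (hf.sub continuous_const) (fun x => sub_le_sub_right (min_le_left _ _) _) (x₀ := x₀) ?_
  exact sub_lt_sub_right (min_lt_of_right_lt hlt) _

/-- Strict quasiconvexity of `f ↦ ∫ normalize f` along pointwise minima. -/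
lemma integral_normF_min_lt_max (hf : Continuous f) (hg : Continuous g)
    (hgf : ∃ x, g x < f x) (hfg : ∃ x, f x < g x) :
    ∫ x, normF (fun x => min (f x) (g x)) x ∂μ <
      max (∫ x, normF f x ∂μ) (∫ x, normF g x ∂μ) := by
  rcases le_total (minF f) (minF g) with h | h
  · obtain ⟨x₀, hx₀⟩ := hgf
    exact lt_max_of_lt_left (integral_normF_min_lt_left hf hg h hx₀)
  · obtain ⟨x₀, hx₀⟩ := hfg
    simp_rw [min_comm (f _)]
    exact lt_max_of_lt_right (integral_normF_min_lt_left hg hf h hx₀)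

end StrictIntegral

theorem stmt_8_general {X : Type*} [MetricSpace X] [CompactSpace X] [Nonempty X]
    [MeasurableSpace X] [BorelSpace X]
    (μ : Measure X) [IsFiniteMeasure μ]
    (hfull : ∀ U : Set X, IsOpen U → U.Nonempty → 0 < μ U)
    (u w : X → ℝ) (hu : Continuous u) (hw : Continuous w)
    (l : ℝ) (hl : 0 < l) (humin : minF u = 0) (humax : maxF u = l) :
    ∀ t ∈ Set.Ioo (0:ℝ) 1,
      (∫ x, normF (fun x => min (t * l) (u x) + w x) x ∂μ) <
        max (∫ x, normF (fun x => min ((0:ℝ) * l) (u x) + w x) x ∂μ)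
            (∫ x, normF (fun x => min ((1:ℝ) * l) (u x) + w x) x ∂μ) ∧
      (∫ x, normF (fun x => min (t * l) (u x) + w x) x ∂μ) <
        max (∫ x, normF w x ∂μ) (∫ x, normF (fun x => u x + w x) x ∂μ) := by
  rintro t ⟨ht₀, ht₁⟩
  have : μ.IsOpenPosMeasure := ⟨fun U hU hne => (hfull U hU hne).ne'⟩
  obtain ⟨x₀, hx₀⟩ := minF_mem_range hu
  obtain ⟨x₁, hx₁⟩ := maxF_mem_range hu
  have key : ∫ x, normF (fun x => min (t * l) (u x) + w x) x ∂μ <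
      max (∫ x, normF w x ∂μ) (∫ x, normF (fun x => u x + w x) x ∂μ) := by
    simp_rw [← min_add_add_right]
    rw [← normF_const_add hw (t * l)]
    refine integral_normF_min_lt_max (continuous_const.add hw) (hu.add hw) ⟨x₀, ?_⟩ ⟨x₁, ?_⟩
    · rw [hx₀, humin]
      linarith [mul_pos ht₀ hl]
    · rw [hx₁, humax]
      linarith [mul_lt_of_lt_one_left hl ht₁]
  have h₀ : (fun x => min ((0:ℝ) * l) (u x) + w x) = w := by
    ext x
    rw [zero_mul, min_eq_left (humin ▸ minF_le hu x), zero_add]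
  have h₁ : (fun x => min ((1:ℝ) * l) (u x) + w x) = fun x => u x + w x := by
    ext x
    rw [one_mul, min_eq_right (humax ▸ le_maxF hu x)]
  rw [h₀, h₁]
  exact ⟨key, key⟩

theorem stmt_8 {X : Type*} [MetricSpace X] [CompactSpace X] [Nonempty X]
    [MeasurableSpace X] [BorelSpace X]
    (μ : Measure X) [IsFiniteMeasure μ]
    (hfull : ∀ U : Set X, IsOpen U → U.Nonempty → 0 < μ U)
    (u w : X → ℝ) (hu : Continuous u) (hw : Continuous w)
    (l : ℝ) (hl : 0 < l) (humin : minF u = 0) (humax : maxF u = l)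
    (hwmin : minF w = 0) :
    ∀ t ∈ Set.Ioo (0:ℝ) 1,
      (∫ x, normF (fun x => min (t * l) (u x) + w x) x ∂μ) <
        max (∫ x, normF (fun x => min ((0:ℝ) * l) (u x) + w x) x ∂μ)
            (∫ x, normF (fun x => min ((1:ℝ) * l) (u x) + w x) x ∂μ) ∧
      (∫ x, normF (fun x => min (t * l) (u x) + w x) x ∂μ) <
        max (∫ x, normF w x ∂μ) (∫ x, normF (fun x => u x + w x) x ∂μ) :=
  stmt_8_general μ hfull u w hu hw l hl humin humax
end

section
/- Let X be a nonempty compact metric space and u, w : X → ℝ continuous with min u = 0, max u = l > 0 and min w = 0. For t ∈ [0,1] set h_t := min(t·l, u) + w. Then for every t ∈ [0,1], osc(h_t) ≤ max(osc(w), osc(u+w)). -/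
open MeasureTheory Set

/-! Compare `h_t` at two points `x, y`: if the cap `t * l` is active at `y`, then
`h_t x - h_t y ≤ w x - w y`; otherwise `h_t x - h_t y ≤ (u + w) x - (u + w) y`. -/

lemma min_add_sub_min_add_le (c a b p q : ℝ) :
    min c a + p - (min c b + q) ≤ max (p - q) (a + p - (b + q)) := by
  rcases le_total c b with hcb | hbc
  · have : min c a ≤ c := min_le_left c a
    rw [min_eq_left hcb]
    exact le_max_of_le_left (by linarith)
  · have : min c a ≤ a := min_le_right c a
    rw [min_eq_right hbc]
    exact le_max_of_le_right (by linarith)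

lemma sub_le_oscF {X : Type*} [TopologicalSpace X] [CompactSpace X] {f : X → ℝ}
    (hf : Continuous f) (x y : X) : f x - f y ≤ oscF f := by
  have hx : f x ≤ maxF f := le_csSup (isCompact_range hf).bddAbove ⟨x, rfl⟩
  have hy : minF f ≤ f y := csInf_le (isCompact_range hf).bddBelow ⟨y, rfl⟩
  rw [oscF]
  linarith

lemma oscF_le_of_forall_sub_le {X : Type*} [Nonempty X] {f : X → ℝ} {M : ℝ}
    (hM : ∀ x y, f x - f y ≤ M) : oscF f ≤ M := by
  have hmax : ∀ y, maxF f ≤ M + f y := fun y =>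
    csSup_le (range_nonempty f) <| forall_mem_range.2 fun x => sub_le_iff_le_add.1 (hM x y)
  have hmin : maxF f - M ≤ minF f :=
    le_csInf (range_nonempty f) <| forall_mem_range.2 fun y => sub_le_iff_le_add'.2 (hmax y)
  rw [oscF]
  linarith

theorem stmt_9_general {X : Type*} [MetricSpace X] [CompactSpace X] [Nonempty X]
    (u w : X → ℝ) (hu : Continuous u) (hw : Continuous w)
    (l : ℝ) :
    ∀ t ∈ Set.Icc (0:ℝ) 1,
      oscF (fun x => min (t * l) (u x) + w x) ≤
        max (oscF w) (oscF (fun x => u x + w x)) :=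
  fun t _ => oscF_le_of_forall_sub_le fun x y =>
    (min_add_sub_min_add_le (t * l) (u x) (u y) (w x) (w y)).trans <|
      max_le_max (sub_le_oscF hw x y) (sub_le_oscF (hu.add hw) x y)

theorem stmt_9 {X : Type*} [MetricSpace X] [CompactSpace X] [Nonempty X]
    (u w : X → ℝ) (hu : Continuous u) (hw : Continuous w)
    (l : ℝ) (hl : 0 < l) (humin : minF u = 0) (humax : maxF u = l)
    (hwmin : minF w = 0) :
    ∀ t ∈ Set.Icc (0:ℝ) 1,
      oscF (fun x => min (t * l) (u x) + w x) ≤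
        max (oscF w) (oscF (fun x => u x + w x)) :=
  stmt_9_general u w hu hw l
end
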